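/- arXiv:2403.13385 — 2 statements merged into one kernel-verified Lean document; each statement's English description precedes it below -/
import Mathlib

section
/- The reweighted ℓ1 scheme monotonically decreases the log-sum objective: if x̃_{i+1} minimizes x ↦ L(x) + Σ_j w_{i,j}|(Ψ*x)_j| over ℝⁿ₊ with weights w_{i,j} = λ/(ρ + |(Ψ*x̃_i)_j|), then G(x̃_{i+1}) ≤ G(x̃_i), where G(x) = L(x) + λΣ_j log(ρ + |(Ψ*x)_j|). -/
/-- The reweighted ℓ1 scheme monotonically decreases the log-sum objective:
if `x̃₁` minimizes `x ↦ L x + Σⱼ wⱼ|(Ψ*x)ⱼ|` over the nonnegative orthant with weights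
`wⱼ = λ/(ρ + |(Ψ*x̃₀)ⱼ|)`, then `G x̃₁ ≤ G x̃₀` where
`G x = L x + λ Σⱼ log(ρ + |(Ψ*x)ⱼ|)`. -/
theorem stmt10 (nn q : ℕ) (L : EuclideanSpace ℝ (Fin nn) → ℝ)
    (Ψs : EuclideanSpace ℝ (Fin nn) →ₗ[ℝ] EuclideanSpace ℝ (Fin q))
    (lam ρ : ℝ) (hlam : 0 < lam) (hρ : 0 < ρ)
    (x₀ x₁ : EuclideanSpace ℝ (Fin nn))
    (K : Set (EuclideanSpace ℝ (Fin nn)))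
    (hK : K = {x | ∀ i, 0 ≤ x i})
    (hx₀ : x₀ ∈ K) (hx₁ : x₁ ∈ K)
    (w : Fin q → ℝ) (hw : ∀ j, w j = lam / (ρ + |Ψs x₀ j|))
    (hmin : IsMinOn (fun x => L x + ∑ j, w j * |Ψs x j|) K x₁)
    (G : EuclideanSpace ℝ (Fin nn) → ℝ)
    (hG : ∀ x, G x = L x + lam * ∑ j, Real.log (ρ + |Ψs x j|)) :
    G x₁ ≤ G x₀ := by

  have hmin0 : L x₁ + ∑ j, w j * |Ψs x₁ j| ≤ L x₀ + ∑ j, w j * |Ψs x₀ j| :=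
    hmin hx₀
  have key : ∀ j : Fin q,
      lam * Real.log (ρ + |Ψs x₁ j|) ≤
        lam * Real.log (ρ + |Ψs x₀ j|) + (w j * |Ψs x₁ j| - w j * |Ψs x₀ j|) := by
    intro j
    set a := ρ + |Ψs x₀ j| with ha
    set b := ρ + |Ψs x₁ j| with hb
    have ha0 : 0 < a := by positivity
    have hb0 : 0 < b := by positivity
    have hlog : Real.log b - Real.log a ≤ b / a - 1 := by
      have := Real.log_le_sub_one_of_pos (show 0 < b / a by positivity)
      rwa [Real.log_div hb0.ne' ha0.ne'] at this
    have hwj : w j = lam / a := hw j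
    have h1 : w j * |Ψs x₁ j| - w j * |Ψs x₀ j| = lam * (b / a - 1) := by
      rw [hwj]
      field_simp
      ring
    rw [h1]
    nlinarith [hlog, hlam.le]
  have hsum : ∑ j, lam * Real.log (ρ + |Ψs x₁ j|) ≤
      (∑ j, lam * Real.log (ρ + |Ψs x₀ j|)) +
        ((∑ j, w j * |Ψs x₁ j|) - ∑ j, w j * |Ψs x₀ j|) := by
    calc ∑ j, lam * Real.log (ρ + |Ψs x₁ j|)
        ≤ ∑ j, (lam * Real.log (ρ + |Ψs x₀ j|) + (w j * |Ψs x₁ j| - w j * |Ψs x₀ j|)) :=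
          Finset.sum_le_sum (fun j _ => key j)
      _ = _ := by rw [Finset.sum_add_distrib, Finset.sum_sub_distrib]
  rw [hG x₁, hG x₀, Finset.mul_sum, Finset.mul_sum]
  linarith [hmin0, hsum]
end

section
/- For L convex differentiable with β-Lipschitz gradient, R proper convex lsc, and stepsize τ = 1/β, the forward–backward step x₊ = prox_{τR}(x − τ∇L(x)) satisfies the sufficient decrease property F(x₊) ≤ F(x) − (β/2)‖x₊ − x‖², where F = L + R. -/
/-!
The descent lemma bounds the smooth part: a `β`-Lipschitz gradient gives
`L xp ≤ L x + ⟪∇L x, xp - x⟫ + β/2 ‖xp - x‖²`, because along the segment the derivative of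
`L` exceeds `⟪∇L x, xp - x⟫` by at most `β t ‖xp - x‖²`. The optimality of the proximal point,
compared with points on the segment towards `x`, gives the variational inequality
`τ R xp ≤ τ R x + ⟪xp - (x - τ∇L x), x - xp⟫ = τ R x - ‖xp - x‖² - τ⟪∇L x, xp - x⟫`.
Multiplying the latter by `β = 1/τ` and adding the two leaves `-β/2 ‖xp - x‖²`.
-/

open Set Filter Topology
open scoped RealInnerProductSpace NNReal

theorem le_of_forall_mem_Ioc_le_add_mul {a b c : ℝ} (h : ∀ t ∈ Ioc (0 : ℝ) 1, a ≤ b + t * c) :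
    a ≤ b := by
  have hlim : Tendsto (fun t : ℝ => b + t * c) (𝓝[>] 0) (𝓝 b) :=
    tendsto_nhdsWithin_of_tendsto_nhds (Continuous.tendsto' (by fun_prop) 0 b (by simp))
  exact ge_of_tendsto hlim (eventually_of_mem (Ioc_mem_nhdsGT one_pos) h)

theorem ConvexOn.le_add_inner_of_isMinOn_add_half_sq {E : Type*} [NormedAddCommGroup E]
    [InnerProductSpace ℝ E] {s : Set E} {f : E → ℝ} (hf : ConvexOn ℝ s f) {y p x : E}
    (hp : IsMinOn (fun u => f u + 1 / 2 * ‖u - y‖ ^ 2) s p) (hps : p ∈ s) (hxs : x ∈ s) :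
    f p ≤ f x + ⟪p - y, x - p⟫ := by
  refine le_of_forall_mem_Ioc_le_add_mul (c := ‖x - p‖ ^ 2 / 2) fun t ⟨ht0, ht1⟩ => ?_
  have hmem : p + t • (x - p) ∈ s := by
    simpa [add_sub_cancel] using hf.1.add_smul_sub_mem hps hxs ⟨ht0.le, ht1⟩
  have hmin : f p + 1 / 2 * ‖p - y‖ ^ 2
      ≤ f (p + t • (x - p)) + 1 / 2 * ‖p + t • (x - p) - y‖ ^ 2 := hp hmem
  have hconv : f (p + t • (x - p)) ≤ (1 - t) * f p + t * f x := by
    have := hf.2 hps hxs (sub_nonneg.2 ht1) ht0.le (by ring)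
    rwa [show (1 - t) • p + t • x = p + t • (x - p) by module] at this
  have hsq : ‖p + t • (x - p) - y‖ ^ 2
      = ‖p - y‖ ^ 2 + 2 * t * ⟪p - y, x - p⟫ + t ^ 2 * ‖x - p‖ ^ 2 := by
    rw [show p + t • (x - p) - y = (p - y) + t • (x - p) by abel, norm_add_sq_real,
      real_inner_smul_right, norm_smul, Real.norm_eq_abs, abs_of_pos ht0]
    ring
  rw [hsq] at hmin
  have : t * f p ≤ t * (f x + ⟪p - y, x - p⟫ + t * (‖x - p‖ ^ 2 / 2)) := by linarith
  exact le_of_mul_le_mul_left this ht0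

theorem le_add_inner_add_of_lipschitzWith_gradient {E : Type*} [NormedAddCommGroup E]
    [InnerProductSpace ℝ E] [CompleteSpace E] {f : E → ℝ} {f' : E → E} {K : ℝ≥0}
    (hf : ∀ x, HasGradientAt f (f' x) x) (hf' : LipschitzWith K f') (x y : E) :
    f y ≤ f x + ⟪f' x, y - x⟫ + K / 2 * ‖y - x‖ ^ 2 := by
  set v := y - x
  let φ : ℝ → ℝ := fun t => f (x + t • v) - t * ⟪f' x, v⟫ - K / 2 * t ^ 2 * ‖v‖ ^ 2
  let φ' : ℝ → ℝ := fun t => ⟪f' (x + t • v) - f' x, v⟫ - K * t * ‖v‖ ^ 2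
  have hφ : ∀ t, HasDerivAt φ (φ' t) t := by
    intro t
    have hline : HasDerivAt (fun s : ℝ => x + s • v) v t := by
      simpa using ((hasDerivAt_id t).smul_const v).const_add x
    have := (((hf _).hasFDerivAt.comp_hasDerivAt t hline).sub
      ((hasDerivAt_id t).mul_const ⟪f' x, v⟫)).sub
      (((hasDerivAt_pow 2 t).const_mul (K / 2 : ℝ)).mul_const (‖v‖ ^ 2))
    refine this.congr_deriv ?_
    rw [InnerProductSpace.toDual_apply_apply]
    simp only [φ', inner_sub_left]
    ring
  have hφ'_nonpos : ∀ t, 0 ≤ t → φ' t ≤ 0 := by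
    intro t ht
    have hlip : ‖f' (x + t • v) - f' x‖ ≤ K * (t * ‖v‖) := by
      simpa [norm_smul, abs_of_nonneg ht] using hf'.norm_sub_le (x + t • v) x
    have := real_inner_le_norm (f' (x + t • v) - f' x) v
    simp only [φ']
    nlinarith [norm_nonneg v]
  have hanti : AntitoneOn φ (Ici 0) := by
    refine antitoneOn_of_hasDerivWithinAt_nonpos (convex_Ici 0)
      (fun t _ => (hφ t).continuousAt.continuousWithinAt) (fun t _ => (hφ t).hasDerivWithinAt) ?_
    rw [interior_Ici]
    exact fun t ht => hφ'_nonpos t (le_of_lt ht)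
  have h10 : φ 1 ≤ φ 0 := hanti self_mem_Ici (by norm_num : (1 : ℝ) ∈ Ici 0) zero_le_one
  simp only [φ, v] at h10
  norm_num at h10
  linarith

theorem stmt13_general (nn : ℕ)
    (L R : EuclideanSpace ℝ (Fin nn) → ℝ)
    (gL : EuclideanSpace ℝ (Fin nn) → EuclideanSpace ℝ (Fin nn))
    (β : NNReal) (hβ : 0 < β)
    (hLgrad : ∀ x, HasGradientAt L (gL x) x)
    (hLlip : LipschitzWith β gL)
    (hRconv : ConvexOn ℝ Set.univ R)
    (τ : ℝ) (hτ : τ = 1 / β)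
    (x xp : EuclideanSpace ℝ (Fin nn))
    (hxp : IsMinOn (fun u => τ * R u + (1 / 2) * ‖u - (x - τ • gL x)‖ ^ 2)
      Set.univ xp) :
    L xp + R xp ≤ L x + R x - ((β : ℝ) / 2) * ‖xp - x‖ ^ 2 := by
  have hτβ : τ * β = 1 := by rw [hτ, one_div, inv_mul_cancel₀ (NNReal.coe_pos.2 hβ).ne']
  have hτ0 : 0 ≤ τ := by rw [hτ]; positivity
  have hdescent := le_add_inner_add_of_lipschitzWith_gradient hLgrad hLlip x xp
  have hprox := (hRconv.smul hτ0).le_add_inner_of_isMinOn_add_half_sq hxp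
    (mem_univ xp) (mem_univ x)
  have hinner : ⟪xp - (x - τ • gL x), x - xp⟫ = -‖xp - x‖ ^ 2 - τ * ⟪gL x, xp - x⟫ := by
    rw [show xp - (x - τ • gL x) = (xp - x) + τ • gL x by abel,
      show x - xp = -(xp - x) by abel]
    simp only [inner_add_left, inner_neg_right, real_inner_smul_left, real_inner_self_eq_norm_sq]
    ring
  simp only [smul_eq_mul, hinner] at hprox
  linear_combination hdescent + (β : ℝ) * hprox + (R x - R xp - ⟪gL x, xp - x⟫) * hτβ

/-- For `L` convex differentiable with `β`-Lipschitz gradient, `R` proper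
convex lsc (here real-valued), and stepsize `τ = 1/β`, the forward–backward step
`x₊ = prox_{τR}(x − τ∇L x)` satisfies the sufficient decrease property
`F x₊ ≤ F x − (β/2)‖x₊ − x‖²`, where `F = L + R`. -/
theorem stmt13 (nn : ℕ)
    (L R : EuclideanSpace ℝ (Fin nn) → ℝ)
    (gL : EuclideanSpace ℝ (Fin nn) → EuclideanSpace ℝ (Fin nn))
    (β : NNReal) (hβ : 0 < β)
    (hLconv : ConvexOn ℝ Set.univ L)
    (hLgrad : ∀ x, HasGradientAt L (gL x) x)
    (hLlip : LipschitzWith β gL)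
    (hRconv : ConvexOn ℝ Set.univ R)
    (hRlsc : LowerSemicontinuous R)
    (τ : ℝ) (hτ : τ = 1 / β)
    (x xp : EuclideanSpace ℝ (Fin nn))
    (hxp : IsMinOn (fun u => τ * R u + (1 / 2) * ‖u - (x - τ • gL x)‖ ^ 2)
      Set.univ xp) :
    L xp + R xp ≤ L x + R x - ((β : ℝ) / 2) * ‖xp - x‖ ^ 2 :=
  stmt13_general nn L R gL β hβ hLgrad hLlip hRconv τ hτ x xp hxp
end
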